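/- arXiv:0903.2307 — 6 statements merged into one kernel-verified Lean document; each statement's English description precedes it below -/
import Mathlib

section
/- For an integer n ≥ 1, the cokernel of the linear map ℤ² → ℤ² given by the matrix A_n − I is a cyclic group of order n; that is, (Fin 2 → ℤ) modulo the range of the linear map determined by A_n − I is isomorphic, as an abelian group, to ℤ/nℤ. -/
/-!
Subtracting the second coordinate from the first kills the image of `Aₙ - I = !![n+1, -1; 1, -1]`
modulo `n`, and conversely a vector `v` with `n ∣ v 0 - v 1` is `(Aₙ - I) ![k, k - v 1]`
where `v 0 - v 1 = n k`. So the cokernel is `ℤ²` modulo the kernel of the surjection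
`v ↦ v 0 - v 1 mod n`, i.e. `ZMod n`.
-/

open Matrix

def subModN (n : ℕ) : (Fin 2 → ℤ) →ₗ[ℤ] ZMod n :=
  (Int.castAddHom (ZMod n)).toIntLinearMap ∘ₗ
    (LinearMap.proj (R := ℤ) (φ := fun _ : Fin 2 => ℤ) 0 - LinearMap.proj 1)

theorem subModN_apply (n : ℕ) (v : Fin 2 → ℤ) : subModN n v = ((v 0 - v 1 : ℤ) : ZMod n) :=
  rfl

theorem subModN_surjective (n : ℕ) : Function.Surjective (subModN n) := by
  intro z
  obtain ⟨a, rfl⟩ := ZMod.intCast_surjective z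
  exact ⟨![a, 0], by simp [subModN_apply]⟩

theorem range_toLin'_eq_ker_subModN (n : ℕ) :
    LinearMap.range (toLin' !![(n : ℤ) + 1, -1; 1, -1]) = LinearMap.ker (subModN n) := by
  ext v
  simp only [LinearMap.mem_range, toLin'_apply, LinearMap.mem_ker, subModN_apply,
    ZMod.intCast_zmod_eq_zero_iff_dvd]
  constructor
  · rintro ⟨x, rfl⟩
    exact ⟨x 0, by simp [mulVec, dotProduct, Fin.sum_univ_two]; ring⟩
  · rintro ⟨k, hk⟩
    refine ⟨![k, k - v 1], ?_⟩
    ext i; fin_cases i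
    · simp [mulVec, dotProduct, Fin.sum_univ_two]; linarith
    · simp [mulVec, dotProduct, Fin.sum_univ_two]

theorem stmt_3_general (n : ℕ) :
    Nonempty (((Fin 2 → ℤ) ⧸ LinearMap.range
        (Matrix.toLin' ((!![(n : ℤ) + 2, -1; 1, 0] : Matrix (Fin 2) (Fin 2) ℤ) - 1)))
      ≃+ ZMod n) := by
  have hA : (!![(n : ℤ) + 2, -1; 1, 0] : Matrix (Fin 2) (Fin 2) ℤ) - 1 =
      !![(n : ℤ) + 1, -1; 1, -1] := by
    ext i j; fin_cases i <;> fin_cases j <;> norm_num [add_sub_assoc]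
  rw [hA, range_toLin'_eq_ker_subModN]
  exact ⟨(LinearMap.quotKerEquivOfSurjective _ (subModN_surjective n)).toAddEquiv⟩

/-- For `n ≥ 1`, the cokernel of the linear map `ℤ² → ℤ²` given
by the matrix `Aₙ - I`, where `Aₙ = !![n+2, -1; 1, 0]`, is cyclic of order `n`:
`(Fin 2 → ℤ) ⧸ range (toLin' (Aₙ - 1)) ≃+ ZMod n`. -/
theorem stmt_3 (n : ℕ) (hn : 1 ≤ n) :
    Nonempty (((Fin 2 → ℤ) ⧸ LinearMap.range
        (Matrix.toLin' ((!![(n : ℤ) + 2, -1; 1, 0] : Matrix (Fin 2) (Fin 2) ℤ) - 1)))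
      ≃+ ZMod n) :=
  stmt_3_general n
end

section
/- For integers n ≥ 1 and g ≥ 1, let B be the block-diagonal 2g×2g integer matrix consisting of g diagonal copies of A_n. Then the cokernel of the linear map ℤ^{2g} → ℤ^{2g} given by B − I is isomorphic, as an abelian group, to the direct sum of g copies of ℤ/nℤ. -/
/-!
`B - I` is block diagonal with blocks `Aₙ - I = !![n+1, -1; 1, -1]`, so its cokernel is the
product of the cokernels of the blocks. On `ℤ²`, the map `v ↦ v₀ - v₁ mod n` onto `ZMod n` kills
the image of `Aₙ - I`, and its kernel is no larger: if `v₀ - v₁ = n k` then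
`(Aₙ - I) (k, k - v₁) = v`.
-/

open Matrix Submodule

section BlockDiagonal

variable {R m ι : Type*} [CommRing R] [Fintype m] [Fintype ι] [DecidableEq ι]

theorem Matrix.blockDiagonal_mulVec_apply (M : ι → Matrix m m R) (v : m × ι → R) (i : m)
    (j : ι) : (blockDiagonal M *ᵥ v) (i, j) = (M j *ᵥ fun i' => v (i', j)) i := by
  simp [mulVec, dotProduct, blockDiagonal_apply, Fintype.sum_prod_type]

variable [DecidableEq m]

def blockwiseEquiv : (m × ι → R) ≃ₗ[R] (ι → m → R) where
  toFun v j i := v (i, j)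
  invFun w p := w p.2 p.1
  map_add' _ _ := rfl
  map_smul' _ _ := rfl
  left_inv _ := rfl
  right_inv _ := rfl

theorem map_range_toLin'_blockDiagonal (M : ι → Matrix m m R) :
    (LinearMap.range (toLin' (blockDiagonal M))).map
        (blockwiseEquiv : (m × ι → R) ≃ₗ[R] (ι → m → R)).toLinearMap =
      pi Set.univ fun j => LinearMap.range (toLin' (M j)) := by
  ext w
  constructor
  · rintro ⟨_, ⟨v, rfl⟩, rfl⟩ j -
    refine ⟨fun i => v (i, j), ?_⟩
    ext i
    simp [blockwiseEquiv, blockDiagonal_mulVec_apply]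
  · intro hw
    choose u hu using fun j => hw j trivial
    refine ⟨_, ⟨fun p => u p.2 p.1, rfl⟩, ?_⟩
    ext j i
    simp [blockwiseEquiv, blockDiagonal_mulVec_apply, ← hu j]

def quotRangeToLin'BlockDiagonalEquiv (M : ι → Matrix m m R) :
    ((m × ι → R) ⧸ LinearMap.range (toLin' (blockDiagonal M))) ≃ₗ[R]
      ∀ j, (m → R) ⧸ LinearMap.range (toLin' (M j)) :=
  (Quotient.equiv _ _ blockwiseEquiv (map_range_toLin'_blockDiagonal M)).trans (quotientPi _)

end BlockDiagonal

def diffMod (n : ℕ) : (Fin 2 → ℤ) →ₗ[ℤ] ZMod n :=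
  (Int.castAddHom (ZMod n)).toIntLinearMap ∘ₗ
    (LinearMap.proj (R := ℤ) (φ := fun _ : Fin 2 => ℤ) 0 - LinearMap.proj 1)

@[simp]
theorem diffMod_apply (n : ℕ) (v : Fin 2 → ℤ) : diffMod n v = ((v 0 - v 1 : ℤ) : ZMod n) := rfl

theorem diffMod_surjective (n : ℕ) : Function.Surjective (diffMod n) := by
  intro c
  obtain ⟨k, rfl⟩ := ZMod.intCast_surjective c
  exact ⟨![k, 0], by simp⟩

theorem sub_one_mulVec_eq (n : ℕ) (w : Fin 2 → ℤ) :
    (!![(n : ℤ) + 2, -1; 1, 0] - 1) *ᵥ w = ![(n + 1) * w 0 - w 1, w 0 - w 1] := by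
  ext i
  fin_cases i <;> simp [mulVec, dotProduct, Fin.sum_univ_two, one_apply] <;> ring

theorem range_toLin'_sub_one_eq_ker_diffMod (n : ℕ) :
    LinearMap.range (toLin' (!![(n : ℤ) + 2, -1; 1, 0] - 1)) = LinearMap.ker (diffMod n) := by
  ext v
  simp only [LinearMap.mem_range, LinearMap.mem_ker, toLin'_apply, sub_one_mulVec_eq,
    diffMod_apply]
  constructor
  · rintro ⟨w, rfl⟩
    have hdiff : (n + 1) * w 0 - w 1 - (w 0 - w 1) = n * w 0 := by ring
    simp [hdiff]
  · intro h
    obtain ⟨k, hk⟩ := (ZMod.intCast_zmod_eq_zero_iff_dvd _ n).1 h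
    refine ⟨![k, k - v 1], ?_⟩
    ext i
    fin_cases i
    · simp only [Fin.zero_eta, Fin.isValue, cons_val_zero, cons_val_one]
      linarith
    · simp

theorem stmt_4_general (n : ℕ) (g : ℕ) :
    Nonempty (((Fin 2 × Fin g → ℤ) ⧸ LinearMap.range
        (Matrix.toLin'
          ((Matrix.blockDiagonal fun _ : Fin g =>
            (!![(n : ℤ) + 2, -1; 1, 0] : Matrix (Fin 2) (Fin 2) ℤ)) - 1)))
      ≃+ (Fin g → ZMod n)) := by
  rw [← blockDiagonal_one, ← blockDiagonal_sub]
  have cokernel_block : ((Fin 2 → ℤ) ⧸ LinearMap.range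
      (toLin' (!![(n : ℤ) + 2, -1; 1, 0] - 1))) ≃ₗ[ℤ] ZMod n :=
    (quotEquivOfEq _ _ (range_toLin'_sub_one_eq_ker_diffMod n)).trans
      ((diffMod n).quotKerEquivOfSurjective (diffMod_surjective n))
  exact ⟨((quotRangeToLin'BlockDiagonalEquiv _).trans
    (LinearEquiv.piCongrRight fun _ => cokernel_block)).toAddEquiv⟩

/-- For `n ≥ 1` and `g ≥ 1`, the cokernel of the linear map
`ℤ^{2g} → ℤ^{2g}` given by `B - I`, where `B` is the block-diagonal matrix made
of `g` copies of `Aₙ = !![n+2, -1; 1, 0]`, is isomorphic as an abelian group to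
the direct sum of `g` copies of `ℤ/nℤ`. -/
theorem stmt_4 (n : ℕ) (hn : 1 ≤ n) (g : ℕ) (hg : 1 ≤ g) :
    Nonempty (((Fin 2 × Fin g → ℤ) ⧸ LinearMap.range
        (Matrix.toLin'
          ((Matrix.blockDiagonal fun _ : Fin g =>
            (!![(n : ℤ) + 2, -1; 1, 0] : Matrix (Fin 2) (Fin 2) ℤ)) - 1)))
      ≃+ (Fin g → ZMod n)) :=
  stmt_4_general n g
end

section
/- Let G₁ and G₂ be groups and let ρ₁ : G₁ → ℂ* and ρ₂ : G₂ → ℂ* be group homomorphisms, with ℂ_ρ the 1-dimensional complex representation of G₁ × G₂ on which (g₁, g₂) acts by multiplication by ρ₁(g₁)·ρ₂(g₂). If ρ₁ and ρ₂ are both nontrivial, then H₁(G₁ × G₂, ℂ_ρ) = 0. -/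
/-!  Group homology via the complex of inhomogeneous chains
`C_n(G, V) = (Fin n → G) →₀ V`. -/

variable {k G V : Type} [CommRing k] [Group G] [AddCommGroup V] [Module k V]

/-- The differential `C_{n+1} → C_n` of the complex of inhomogeneous chains of a
group `G` with coefficients in a representation `ρ`. -/
noncomputable def chainsD (ρ : Representation k G V) (n : ℕ) :
    ((Fin (n + 1) → G) →₀ V) →ₗ[k] ((Fin n → G) →₀ V) :=
  Finsupp.lsum k fun g =>
    (Finsupp.lsingle fun i => g i.succ).comp (ρ (g 0)⁻¹) +
      ∑ j : Fin (n + 1),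
        ((-1 : k) ^ ((j : ℕ) + 1)) • Finsupp.lsingle (Fin.contractNth j (· * ·) g)

/-- First group homology `H₁(G, ρ) = ker (∂ : C₁ → C₀) / im (∂ : C₂ → C₁)`. -/
noncomputable abbrev groupHomology1 (ρ : Representation k G V) :=
  LinearMap.ker (chainsD ρ 0) ⧸
    (LinearMap.range (chainsD ρ 1)).comap (LinearMap.ker (chainsD ρ 0)).subtype

/-- The 1-dimensional complex representation of `G` attached to a character
`χ : G →* ℂˣ`. -/
noncomputable def charRep {G : Type} [Group G] (χ : G →* ℂˣ) :
    Representation ℂ G ℂ where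
  toFun g := (χ g : ℂ) • LinearMap.id
  map_one' := by
    simp only [map_one, Units.val_one, one_smul]
    rfl
  map_mul' g h := by
    simp only [map_mul, Units.val_mul, mul_smul]
    rfl

/-!
Write `[g]` for the 1-chain `single ![g] 1` and `χ̄ g = χ g⁻¹`. Modulo boundaries,
`[gh] = [g] + χ̄ g • [h]`, and for commuting `x, y` swapping the two factors gives
`(1 - χ̄ y) • [x] = (1 - χ̄ x) • [y]`. With `a = (t, 1)` and `b = (1, s)`, where `ρ₁ t ≠ 1` and
`ρ₂ s ≠ 1`, this relation passes from commuting pairs to `(g₁, 1)` and `b` directly, to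
`(1, g₂)` and `b` through `a`, and then to every `g = (g₁, 1) * (1, g₂)`. So every `[g]` is
congruent to `(1 - χ̄ g) / (1 - χ̄ b) • [b]`, and a 1-cycle `∑ v_g [g]`, for which
`∑ v_g (1 - χ̄ g) = 0`, is a boundary.
-/
theorem Units.one_sub_inv_ne_zero {K : Type*} [DivisionRing K] {u : Kˣ} (hu : u ≠ 1) :
    1 - (u : K)⁻¹ ≠ 0 :=
  sub_ne_zero.2 fun h => hu (Units.val_eq_one.1 (inv_eq_one.1 h.symm))

namespace CharRep

variable (χ : G →* ℂˣ)

local notation "B₁" => LinearMap.range (chainsD (charRep χ) 1)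

theorem inv_apply (g : G) (v : ℂ) : charRep χ g⁻¹ v = (χ g : ℂ)⁻¹ * v := by
  simp [charRep]

theorem chainsD_zero_single (g : Fin 1 → G) (v : ℂ) :
    chainsD (charRep χ) 0 (Finsupp.single g v) =
      Finsupp.single default ((χ (g 0) : ℂ)⁻¹ * v - v) := by
  simp [chainsD, inv_apply, sub_eq_add_neg, Subsingleton.elim _ (default : Fin 0 → G)]

theorem chainsD_one_single_pair (g h : G) :
    chainsD (charRep χ) 1 (Finsupp.single ![g, h] 1) =
      (χ g : ℂ)⁻¹ • Finsupp.single ![h] 1 - Finsupp.single ![g * h] 1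
        + Finsupp.single ![g] 1 := by
  have hsucc : (fun _ : Fin 1 => h) = ![h] := by
    funext i; fin_cases i; rfl
  have hcontract0 : Fin.contractNth 0 (· * ·) ![g, h] = ![g * h] := by
    funext i; fin_cases i; simp [Fin.contractNth]
  have hcontract1 : Fin.contractNth 1 (· * ·) ![g, h] = ![g] := by
    funext i; fin_cases i; simp [Fin.contractNth]
  simp [chainsD, Fin.sum_univ_succ, inv_apply, hsucc, hcontract0, hcontract1, sub_eq_add_neg,
    add_assoc]

/-- For commuting `x, y` this is the boundary of `[x|y] - [y|x]`. -/
noncomputable def commutatorChain (x y : G) : (Fin 1 → G) →₀ ℂ :=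
  (1 - (χ y : ℂ)⁻¹) • Finsupp.single ![x] 1 - (1 - (χ x : ℂ)⁻¹) • Finsupp.single ![y] 1

theorem commutatorChain_mem_of_commute {x y : G} (h : Commute x y) :
    commutatorChain χ x y ∈ B₁ := by
  refine ⟨Finsupp.single ![x, y] 1 - Finsupp.single ![y, x] 1, ?_⟩
  rw [map_sub, chainsD_one_single_pair, chainsD_one_single_pair, h.eq, commutatorChain]
  module

theorem commutatorChain_mul_left_mem {g h b : G} (hg : commutatorChain χ g b ∈ B₁)
    (hh : commutatorChain χ h b ∈ B₁) : commutatorChain χ (g * h) b ∈ B₁ := by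
  have key : commutatorChain χ (g * h) b = commutatorChain χ g b
      + (χ g : ℂ)⁻¹ • commutatorChain χ h b
      - (1 - (χ b : ℂ)⁻¹) • chainsD (charRep χ) 1 (Finsupp.single ![g, h] 1) := by
    simp only [chainsD_one_single_pair, commutatorChain, map_mul, Units.val_mul, mul_inv]
    module
  rw [key]
  exact sub_mem (add_mem hg (Submodule.smul_mem _ _ hh))
    (Submodule.smul_mem _ _ (LinearMap.mem_range_self _ _))

theorem commutatorChain_mem_trans {g a b : G} (ha : χ a ≠ 1)
    (hga : commutatorChain χ g a ∈ B₁) (hab : commutatorChain χ a b ∈ B₁) :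
    commutatorChain χ g b ∈ B₁ := by
  have key : (1 - (χ a : ℂ)⁻¹) • commutatorChain χ g b =
      (1 - (χ b : ℂ)⁻¹) • commutatorChain χ g a + (1 - (χ g : ℂ)⁻¹) • commutatorChain χ a b := by
    simp only [commutatorChain]
    module
  rw [← Submodule.smul_mem_iff _ (Units.one_sub_inv_ne_zero ha), key]
  exact add_mem (Submodule.smul_mem _ _ hga) (Submodule.smul_mem _ _ hab)

theorem smul_add_chainsD_zero_smul_mem {b : G} (hb : ∀ g, commutatorChain χ g b ∈ B₁)
    (f : (Fin 1 → G) →₀ ℂ) :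
    (1 - (χ b : ℂ)⁻¹) • f + chainsD (charRep χ) 0 f default • Finsupp.single ![b] 1 ∈ B₁ := by
  induction f using Finsupp.induction_linear with
  | zero => simp
  | add f₁ f₂ h₁ h₂ =>
    convert add_mem h₁ h₂ using 1
    simp only [map_add, Finsupp.add_apply]
    module
  | single x v =>
    rw [show x = ![x 0] by funext i; fin_cases i; rfl]
    convert Submodule.smul_mem _ v (hb (x 0)) using 1
    rw [chainsD_zero_single, Finsupp.single_eq_same, Matrix.cons_val_zero, commutatorChain,
      ← Finsupp.smul_single_one ![x 0] v]
    module

theorem mem_range_chainsD_one_of_mem_ker {b : G} (hb1 : χ b ≠ 1)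
    (hb : ∀ g, commutatorChain χ g b ∈ B₁) {f : (Fin 1 → G) →₀ ℂ}
    (hf : f ∈ LinearMap.ker (chainsD (charRep χ) 0)) : f ∈ B₁ := by
  have h := smul_add_chainsD_zero_smul_mem χ hb f
  rwa [LinearMap.mem_ker.1 hf, Finsupp.zero_apply, zero_smul, add_zero,
    Submodule.smul_mem_iff _ (Units.one_sub_inv_ne_zero hb1)] at h

theorem subsingleton_groupHomology1 {b : G} (hb1 : χ b ≠ 1)
    (hb : ∀ g, commutatorChain χ g b ∈ B₁) : Subsingleton (groupHomology1 (charRep χ)) := by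
  rw [Submodule.Quotient.subsingleton_iff, Submodule.eq_top_iff']
  exact fun f => mem_range_chainsD_one_of_mem_ker χ hb1 hb f.2

end CharRep

open CharRep in
/-- Let `G₁, G₂` be groups and `ρ₁ : G₁ → ℂ*`, `ρ₂ : G₂ → ℂ*`
homomorphisms, and let `ℂ_ρ` be the representation of `G₁ × G₂` on which
`(g₁, g₂)` acts by multiplication by `ρ₁ g₁ * ρ₂ g₂`.  If `ρ₁` and `ρ₂` are both
nontrivial, then `H₁(G₁ × G₂, ℂ_ρ) = 0`. -/
theorem stmt_10 (G₁ G₂ : Type) [Group G₁] [Group G₂]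
    (ρ₁ : G₁ →* ℂˣ) (ρ₂ : G₂ →* ℂˣ) (h₁ : ρ₁ ≠ 1) (h₂ : ρ₂ ≠ 1) :
    Subsingleton
      (groupHomology1 (charRep
        (ρ₁.comp (MonoidHom.fst G₁ G₂) * ρ₂.comp (MonoidHom.snd G₁ G₂)))) := by
  obtain ⟨t, ht⟩ := DFunLike.ne_iff.1 h₁
  obtain ⟨s, hs⟩ := DFunLike.ne_iff.1 h₂
  set χ := ρ₁.comp (MonoidHom.fst G₁ G₂) * ρ₂.comp (MonoidHom.snd G₁ G₂)
  have hχ (g₁ : G₁) (g₂ : G₂) : χ (g₁, g₂) = ρ₁ g₁ * ρ₂ g₂ := rfl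
  have commute_inl_inr (g₁ : G₁) (g₂ : G₂) : Commute ((g₁, 1) : G₁ × G₂) (1, g₂) := by
    simp [Commute, SemiconjBy]
  refine subsingleton_groupHomology1 χ (b := (1, s)) (by simpa [hχ] using hs) fun g => ?_
  rw [← Prod.fst_mul_snd g]
  refine commutatorChain_mul_left_mem χ
    (commutatorChain_mem_of_commute χ (commute_inl_inr _ _)) ?_
  exact commutatorChain_mem_trans χ (a := (t, 1)) (by simpa [hχ] using ht)
    (commutatorChain_mem_of_commute χ (commute_inl_inr _ _).symm)
    (commutatorChain_mem_of_commute χ (commute_inl_inr _ _))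
end

section
/- Let G₁ and G₂ be groups and let ρ₁ : G₁ → ℂ* be a nontrivial group homomorphism. Let ℂ_ρ be the 1-dimensional complex representation of G₁ × G₂ on which (g₁, g₂) acts by multiplication by ρ₁(g₁) (i.e., the character is trivial on the factor G₂). Then H₁(G₁ × G₂, ℂ_ρ) is isomorphic, as a complex vector space, to H₁(G₁, ℂ_{ρ₁}). -/
/-!  Group homology via the complex of inhomogeneous chains
`C_n(G, V) = (Fin n → G) →₀ V`. -/

variable {k G V : Type} [CommRing k] [Group G] [AddCommGroup V] [Module k V]

/-!
The projection `G₁ × G₂ → G₁` and the inclusion `G₁ → G₁ × G₂` are compatible with the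
characters, so they induce maps on `H₁`, and `fst ∘ inl = id`. The other composite is the
identity on `H₁` because `inl ∘ fst` moves every chain by a boundary. Indeed
`∂[(a₁,1) | (1,a₂)] = ρ₁(a₁)⁻¹[(1,a₂)] - [(a₁,a₂)] + [(a₁,1)]`, and `[(1,a₂)]` is itself a
boundary: for `s` with `ρ₁ s ≠ 1`, the elements `(s,1)` and `(1,a₂)` commute and
`∂([(s,1) | (1,a₂)] - [(1,a₂) | (s,1)]) = (ρ₁(s)⁻¹ - 1) [(1,a₂)]`.
-/

open Finsupp

section Chains

variable {H : Type} [Group H]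

lemma chainsD_single (ρ : Representation k G V) (n : ℕ) (g : Fin (n + 1) → G) (v : V) :
    chainsD ρ n (single g v) =
      single (fun i => g i.succ) (ρ (g 0)⁻¹ v) +
        ∑ j : Fin (n + 1), ((-1 : k) ^ ((j : ℕ) + 1)) • single (Fin.contractNth j (· * ·) g) v := by
  simp [chainsD]

lemma chainsD_one_single (ρ : Representation k G V) (a b : G) (v : V) :
    chainsD ρ 1 (single ![a, b] v) = single ![b] (ρ a⁻¹ v) - single ![a * b] v + single ![a] v := by
  have h₀ : Fin.contractNth (0 : Fin 2) (· * ·) ![a, b] = ![a * b] := by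
    ext i; fin_cases i; exact Fin.contractNth_apply_of_eq _ _ _ _ rfl
  have h₁ : Fin.contractNth (1 : Fin 2) (· * ·) ![a, b] = ![a] := by
    ext i; fin_cases i; exact Fin.contractNth_apply_of_lt _ _ _ _ Nat.zero_lt_one
  have hsucc : (fun i : Fin 1 => ![a, b] i.succ) = ![b] := by
    ext i; fin_cases i; rfl
  rw [chainsD_single, Fin.sum_univ_two, hsucc, h₀, h₁]
  simp only [Fin.isValue, Matrix.cons_val_zero, Fin.val_zero, Fin.val_one, Nat.reduceAdd, pow_one,
    neg_one_sq]
  module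

lemma chainsD_one_single_sub_single_swap (ρ : Representation k G V) {a b : G} (hab : Commute a b)
    (v : V) :
    chainsD ρ 1 (single ![a, b] v - single ![b, a] v) =
      single ![b] (ρ a⁻¹ v - v) - single ![a] (ρ b⁻¹ v - v) := by
  rw [map_sub, chainsD_one_single, chainsD_one_single, hab.eq, single_sub, single_sub]
  abel

lemma MonoidHom.comp_contractNth (f : G →* H) {n : ℕ} (j : Fin (n + 1)) (g : Fin (n + 1) → G) :
    f ∘ Fin.contractNth j (· * ·) g = Fin.contractNth j (· * ·) (f ∘ g) := by
  ext i
  rcases lt_trichotomy (i : ℕ) j with h | h | h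
  · simp [Fin.contractNth_apply_of_lt _ _ _ _ h]
  · simp [Fin.contractNth_apply_of_eq _ _ _ _ h]
  · simp [Fin.contractNth_apply_of_gt _ _ _ _ h]

noncomputable def chainsMap (f : G →* H) (n : ℕ) :
    ((Fin n → G) →₀ V) →ₗ[k] ((Fin n → H) →₀ V) :=
  lmapDomain V k (f ∘ ·)

lemma chainsMap_single (f : G →* H) {n : ℕ} (g : Fin n → G) (v : V) :
    chainsMap (k := k) f n (single g v) = single (f ∘ g) v :=
  mapDomain_single

lemma chainsMap_id {n : ℕ} (x : (Fin n → G) →₀ V) : chainsMap (k := k) (MonoidHom.id G) n x = x :=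
  mapDomain_id

lemma chainsMap_chainsMap {K : Type} [Group K] (f : G →* H) (f' : H →* K) (n : ℕ)
    (x : (Fin n → G) →₀ V) :
    chainsMap (k := k) f' n (chainsMap (k := k) f n x) = chainsMap (k := k) (f'.comp f) n x :=
  (mapDomain_comp ..).symm

lemma chainsD_comp_chainsMap {ρ : Representation k G V} {σ : Representation k H V} {f : G →* H}
    (hf : ∀ g, σ (f g) = ρ g) (n : ℕ) :
    chainsD σ n ∘ₗ chainsMap f (n + 1) = chainsMap f n ∘ₗ chainsD ρ n := by
  ext g v : 2
  simp only [LinearMap.comp_apply, lsingle_apply, chainsMap, lmapDomain_apply, mapDomain_single,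
    chainsD_single, mapDomain_add, mapDomain_finsetSum, mapDomain_smul, Function.comp_apply,
    ← map_inv, hf, MonoidHom.comp_contractNth]
  rfl

end Chains

section Homology1

variable {H : Type} [Group H] {ρ : Representation k G V} {σ : Representation k H V}

lemma chainsMap_mem_ker_chainsD {f : G →* H} (hf : ∀ g, σ (f g) = ρ g)
    {x : (Fin 1 → G) →₀ V} (hx : x ∈ LinearMap.ker (chainsD ρ 0)) :
    chainsMap (k := k) f 1 x ∈ LinearMap.ker (chainsD σ 0) := by
  rw [LinearMap.mem_ker] at hx ⊢
  rw [← LinearMap.comp_apply, chainsD_comp_chainsMap hf, LinearMap.comp_apply, hx, map_zero]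

noncomputable def groupHomology1Map (f : G →* H) (hf : ∀ g, σ (f g) = ρ g) :
    groupHomology1 ρ →ₗ[k] groupHomology1 σ :=
  Submodule.mapQ _ _ ((chainsMap f 1).restrict fun _ => chainsMap_mem_ker_chainsD hf) <| by
    rintro z ⟨y, hy⟩
    exact ⟨chainsMap f 2 y, by
      rw [← LinearMap.comp_apply, chainsD_comp_chainsMap hf, LinearMap.comp_apply, hy]; rfl⟩

lemma groupHomology1Map_mk {f : G →* H} (hf : ∀ g, σ (f g) = ρ g)
    (z : LinearMap.ker (chainsD ρ 0)) :
    groupHomology1Map f hf (Submodule.Quotient.mk z) =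
      Submodule.Quotient.mk ⟨chainsMap f 1 z, chainsMap_mem_ker_chainsD hf z.2⟩ :=
  rfl

lemma groupHomology1Map_comp_eq_id {f : G →* H} {f' : H →* G} (hf : ∀ g, σ (f g) = ρ g)
    (hf' : ∀ h, ρ (f' h) = σ h)
    (h : ∀ x ∈ LinearMap.ker (chainsD ρ 0),
      chainsMap (k := k) f' 1 (chainsMap (k := k) f 1 x) - x ∈ LinearMap.range (chainsD ρ 1)) :
    groupHomology1Map f' hf' ∘ₗ groupHomology1Map f hf = LinearMap.id := by
  ext z
  simp only [LinearMap.comp_apply, Submodule.mkQ_apply, LinearMap.id_apply, groupHomology1Map_mk,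
    Submodule.Quotient.eq]
  exact h z z.2

end Homology1

lemma charRep_apply (χ : G →* ℂˣ) (g : G) (v : ℂ) : charRep χ g v = χ g * v :=
  rfl

lemma single_mem_range_chainsD_charRep (χ : G →* ℂˣ) {a b : G} (hab : Commute a b)
    (ha : χ a ≠ 1) (hb : χ b = 1) (v : ℂ) :
    single ![b] v ∈ LinearMap.range (chainsD (charRep χ) 1) := by
  have hc : ((χ a : ℂ))⁻¹ - 1 ≠ 0 := by
    rw [sub_ne_zero, inv_ne_one, Ne, ← Units.val_one, Units.val_inj]
    exact ha
  refine ⟨single ![a, b] ((((χ a : ℂ))⁻¹ - 1)⁻¹ * v) -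
    single ![b, a] ((((χ a : ℂ))⁻¹ - 1)⁻¹ * v), ?_⟩
  rw [chainsD_one_single_sub_single_swap _ hab, charRep_apply, charRep_apply, map_inv, map_inv, hb,
    inv_one, Units.val_one, one_mul, sub_self, single_zero, sub_zero, Units.val_inv_eq_inv_val,
    ← sub_one_mul, mul_inv_cancel_left₀ hc]

lemma chainsMap_inl_fst_sub_self_mem_range {G₁ G₂ : Type} [Group G₁] [Group G₂] {ρ₁ : G₁ →* ℂˣ}
    {s : G₁} (hs : ρ₁ s ≠ 1) (x : (Fin 1 → G₁ × G₂) →₀ ℂ) :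
    chainsMap (k := ℂ) (MonoidHom.inl G₁ G₂) 1 (chainsMap (k := ℂ) (MonoidHom.fst G₁ G₂) 1 x) - x ∈
      LinearMap.range (chainsD (charRep (ρ₁.comp (MonoidHom.fst G₁ G₂))) 1) := by
  rw [chainsMap_chainsMap]
  induction x using Finsupp.induction_linear with
  | zero => simp
  | add x y hx hy => rw [map_add, add_sub_add_comm]; exact add_mem hx hy
  | single g v =>
    obtain ⟨⟨a₁, a₂⟩, rfl⟩ : ∃ a, g = ![a] := ⟨g 0, funext (Fin.forall_fin_one.2 rfl)⟩
    have h₂ : single ![((1 : G₁), a₂)] ((ρ₁ a₁ : ℂ)⁻¹ * v) ∈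
        LinearMap.range (chainsD (charRep (ρ₁.comp (MonoidHom.fst G₁ G₂))) 1) :=
      single_mem_range_chainsD_charRep _ (a := (s, 1))
        ((Commute.one_right s).prod (Commute.one_left a₂)) hs (map_one ρ₁) _
    have hbd : single ![(a₁, (1 : G₂))] v - single ![(a₁, a₂)] v =
        chainsD (charRep (ρ₁.comp (MonoidHom.fst G₁ G₂))) 1 (single ![(a₁, 1), (1, a₂)] v) -
          single ![((1 : G₁), a₂)] ((ρ₁ a₁ : ℂ)⁻¹ * v) := by
      rw [chainsD_one_single, charRep_apply, Prod.mk_mul_mk, mul_one, one_mul]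
      simp only [MonoidHom.comp_apply, MonoidHom.coe_fst, Prod.inv_mk, map_inv,
        Units.val_inv_eq_inv_val]
      abel
    have hinl_fst : (MonoidHom.inl G₁ G₂).comp (MonoidHom.fst G₁ G₂) ∘ ![(a₁, a₂)] = ![(a₁, 1)] :=
      funext (Fin.forall_fin_one.2 rfl)
    rw [chainsMap_single, hinl_fst, hbd]
    exact sub_mem (LinearMap.mem_range_self _ _) h₂

/-- Let `G₁, G₂` be groups and `ρ₁ : G₁ → ℂ*` a nontrivial
homomorphism, and let `ℂ_ρ` be the representation of `G₁ × G₂` on which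
`(g₁, g₂)` acts by multiplication by `ρ₁ g₁` (the pullback of `ℂ_{ρ₁}` along the
first projection).  Then `H₁(G₁ × G₂, ℂ_ρ)` is isomorphic as a complex vector
space to `H₁(G₁, ℂ_{ρ₁})`. -/
theorem stmt_11 (G₁ G₂ : Type) [Group G₁] [Group G₂]
    (ρ₁ : G₁ →* ℂˣ) (h₁ : ρ₁ ≠ 1) :
    Nonempty
      (groupHomology1 (charRep (ρ₁.comp (MonoidHom.fst G₁ G₂))) ≃ₗ[ℂ]
        groupHomology1 (charRep ρ₁)) := by
  obtain ⟨s, hs⟩ := DFunLike.ne_iff.mp h₁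
  have hfst : ∀ g, charRep ρ₁ (MonoidHom.fst G₁ G₂ g) =
      charRep (ρ₁.comp (MonoidHom.fst G₁ G₂)) g := fun _ => rfl
  have hinl : ∀ g, charRep (ρ₁.comp (MonoidHom.fst G₁ G₂)) (MonoidHom.inl G₁ G₂ g) =
      charRep ρ₁ g := fun _ => rfl
  refine ⟨.ofLinearMap (groupHomology1Map _ hfst) (groupHomology1Map _ hinl) ?_ ?_⟩
  · refine groupHomology1Map_comp_eq_id _ _ fun x _ => ?_
    rw [chainsMap_chainsMap, MonoidHom.fst_comp_inl, chainsMap_id, sub_self]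
    exact zero_mem _
  · exact groupHomology1Map_comp_eq_id _ _ fun x _ => chainsMap_inl_fst_sub_self_mem_range hs x
end

section
/- Let n ≥ 2 and g ≥ 1 be integers, let B be the block-diagonal 2g×2g integer matrix consisting of g diagonal copies of A_n, and let σ_B be the automorphism of the free abelian group ℤ^{2g} determined by B (invertible over ℤ since det A_n = 1). Then the abelianization of the group ℤ × (ℤ^{2g} ⋊_{σ_B} ℤ) is isomorphic to ℤ² ⊕ (ℤ/nℤ)^g. -/
/-!
Abelianization commutes with products, and for an abelian group `N` the abelianization of
`N ⋊[φ] H` is `N_H × H^ab`, where the coinvariants `N_H` are the quotient of `N` by the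
subgroup generated by the elements `φ h x / x`. For `H = ℤ` acting through `B` these elements
are `(B - 1) v`; on each block, `A_n - 1 = !![n + 1, -1; 1, -1]` has image
`{(x, y) | n ∣ x - y}`, so `(x, y) ↦ x - y mod n` identifies the coinvariants with `(ℤ/nℤ)^g`.
-/

@[ext]
theorem MonoidHom.prod_ext {M N P : Type*} [MulOneClass M] [MulOneClass N] [MulOneClass P]
    {f g : M × N →* P} (hl : f.comp (inl M N) = g.comp (inl M N))
    (hr : f.comp (inr M N) = g.comp (inr M N)) : f = g :=
  MonoidHom.ext fun ⟨m, n⟩ => by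
    rw [← mul_one m, ← one_mul n, ← Prod.mk_mul_mk, map_mul, map_mul]
    exact congr_arg₂ (· * ·) (DFunLike.congr_fun hl m) (DFunLike.congr_fun hr n)

lemma MulAut.apply_zpow_apply_of_invariant {M α : Type*} [Monoid M] {σ : MulAut M} {f : M → α}
    (hf : ∀ x, f (σ x) = f x) (k : ℤ) (x : M) : f ((σ ^ k) x) = f x := by
  induction k using Int.induction_on generalizing x with
  | zero => rfl
  | succ k ih => rw [zpow_add_one, MulAut.mul_apply, ih, hf]
  | pred k ih => rw [zpow_sub_one, MulAut.mul_apply, ih, ← hf, MulAut.apply_inv_self]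

def Abelianization.prodEquiv {G H : Type*} [Group G] [Group H] :
    Abelianization (G × H) ≃* Abelianization G × Abelianization H :=
  MonoidHom.toMulEquiv ((map (MonoidHom.fst G H)).prod (map (MonoidHom.snd G H)))
    ((map (MonoidHom.inl G H)).coprod (map (MonoidHom.inr G H)))
    (by ext <;> simp)
    (by ext <;> simp)

section Coinvariants

variable {N H : Type*} [CommGroup N] [Group H]

def coinvariantsKer (φ : H →* MulAut N) : Subgroup N :=
  Subgroup.closure (Set.range fun p : H × N => φ p.1 p.2 / p.2)

lemma coinvariants_mk_aut_apply (φ : H →* MulAut N) (h : H) (x : N) :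
    (φ h x : N ⧸ coinvariantsKer φ) = x :=
  QuotientGroup.eq_iff_div_mem.mpr (Subgroup.subset_closure ⟨(h, x), rfl⟩)

lemma coinvariantsKer_le_ker {M : Type*} [Group M] {φ : H →* MulAut N} {f : N →* M}
    (hf : ∀ h x, f (φ h x) = f x) : coinvariantsKer φ ≤ f.ker :=
  (Subgroup.closure_le _).mpr <| by
    rintro _ ⟨⟨h, x⟩, rfl⟩
    simp [hf]

def abelianizationSemidirectProductEquiv (φ : H →* MulAut N) :
    Abelianization (N ⋊[φ] H) ≃* (N ⧸ coinvariantsKer φ) × Abelianization H :=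
  MonoidHom.toMulEquiv
    (Abelianization.lift (SemidirectProduct.lift
      ((MonoidHom.inl _ _).comp (QuotientGroup.mk' _))
      ((MonoidHom.inr _ _).comp Abelianization.of)
      fun h => by ext x <;> simp [coinvariants_mk_aut_apply]))
    ((QuotientGroup.lift (coinvariantsKer φ) (Abelianization.of.comp SemidirectProduct.inl)
        (coinvariantsKer_le_ker fun h x => by simp [SemidirectProduct.inl_aut])).coprod
      (Abelianization.map SemidirectProduct.inr))
    (by
      ext : 1
      exact SemidirectProduct.hom_ext (by ext; simp) (by ext; simp))
    (by ext <;> simp)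

end Coinvariants

section BlockMatrix

open Matrix

variable (n : ℕ) (ι : Type*)

def diffModHom : (Fin 2 × ι → ℤ) →+ (ι → ZMod n) :=
  AddMonoidHom.mk' (fun v i => ((v (0, i) - v (1, i) : ℤ) : ZMod n)) fun v w => by
    ext i
    push_cast [Pi.add_apply]
    ring

variable {n ι} in
lemma diffModHom_apply (v : Fin 2 × ι → ℤ) (i : ι) :
    diffModHom n ι v i = ((v (0, i) - v (1, i) : ℤ) : ZMod n) := rfl

lemma diffModHom_surjective : Function.Surjective (diffModHom n ι) := fun c =>
  ⟨fun p => if p.1 = 0 then (c p.2).cast else 0, funext fun i => by simp [diffModHom_apply]⟩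

def matrixA : Matrix (Fin 2) (Fin 2) ℤ := !![(n : ℤ) + 2, -1; 1, 0]

def matrixB [DecidableEq ι] : Matrix (Fin 2 × ι) (Fin 2 × ι) ℤ :=
  blockDiagonal fun _ : ι => matrixA n

variable {n ι} [Fintype ι] [DecidableEq ι]

lemma matrixB_mulVec_zero (v : Fin 2 × ι → ℤ) (i : ι) :
    (matrixB n ι *ᵥ v) (0, i) = (n + 2) * v (0, i) - v (1, i) := by
  simp [matrixB, matrixA, mulVec, dotProduct, Fintype.sum_prod_type, blockDiagonal_apply]
  ring

lemma matrixB_mulVec_one (v : Fin 2 × ι → ℤ) (i : ι) :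
    (matrixB n ι *ᵥ v) (1, i) = v (0, i) := by
  simp [matrixB, matrixA, mulVec, dotProduct, Fintype.sum_prod_type, blockDiagonal_apply]

lemma diffModHom_mulVec (v : Fin 2 × ι → ℤ) :
    diffModHom n ι (matrixB n ι *ᵥ v) = diffModHom n ι v := by
  ext i
  simp only [diffModHom_apply, matrixB_mulVec_zero, matrixB_mulVec_one]
  push_cast
  rw [ZMod.natCast_self]
  ring

lemma exists_mulVec_sub_eq_of_diffModHom_eq_zero {v : Fin 2 × ι → ℤ}
    (hv : diffModHom n ι v = 0) : ∃ w, matrixB n ι *ᵥ w - w = v := by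
  have hdvd (i : ι) : (n : ℤ) ∣ v (0, i) - v (1, i) :=
    (ZMod.intCast_zmod_eq_zero_iff_dvd _ _).mp (congr_fun hv i)
  choose k hk using hdvd
  refine ⟨fun p => k p.2 - if p.1 = 0 then 0 else v (1, p.2), funext fun ⟨j, i⟩ => ?_⟩
  fin_cases j
  · simp [matrixB_mulVec_zero]
    linarith [hk i]
  · simp [matrixB_mulVec_one]

end BlockMatrix

section BlockAutomorphism

variable {n : ℕ} {ι : Type*} [Fintype ι] [DecidableEq ι]
  {σ : MulAut (Multiplicative (Fin 2 × ι → ℤ))}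

theorem coinvariantsKer_eq_ker_diffModHom
    (hσ : ∀ v, Multiplicative.toAdd (σ (Multiplicative.ofAdd v)) = Matrix.toLin' (matrixB n ι) v) :
    coinvariantsKer (zpowersHom _ σ) = (diffModHom n ι).toMultiplicative.ker := by
  have hinv (x) :
      (diffModHom n ι).toMultiplicative (σ x) = (diffModHom n ι).toMultiplicative x := by
    rw [AddMonoidHom.toMultiplicative_apply_apply, AddMonoidHom.toMultiplicative_apply_apply,
      ← ofAdd_toAdd x, hσ, Matrix.toLin'_apply, diffModHom_mulVec, toAdd_ofAdd]
  refine le_antisymm (coinvariantsKer_le_ker fun k x => ?_) fun x hx => ?_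
  · exact MulAut.apply_zpow_apply_of_invariant hinv _ x
  · obtain ⟨w, hw⟩ :=
      exists_mulVec_sub_eq_of_diffModHom_eq_zero (congr_arg Multiplicative.toAdd hx)
    refine Subgroup.subset_closure ⟨(Multiplicative.ofAdd 1, Multiplicative.ofAdd w), ?_⟩
    apply Multiplicative.toAdd.injective
    simp [hσ, ← hw]

noncomputable def quotientCoinvariantsKerEquiv
    (hσ : ∀ v, Multiplicative.toAdd (σ (Multiplicative.ofAdd v)) = Matrix.toLin' (matrixB n ι) v) :
    Multiplicative (Fin 2 × ι → ℤ) ⧸ coinvariantsKer (zpowersHom _ σ) ≃*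
      Multiplicative (ι → ZMod n) :=
  (QuotientGroup.quotientMulEquivOfEq (coinvariantsKer_eq_ker_diffModHom hσ)).trans
    (QuotientGroup.quotientKerEquivOfSurjective _ (diffModHom_surjective n ι))

end BlockAutomorphism

def prodFinTwoArrowEquiv (A C : Type*) [AddCommGroup A] [AddCommGroup C] :
    Multiplicative A × (Multiplicative C × Multiplicative A) ≃*
      Multiplicative ((Fin 2 → A) × C) :=
  ((MulEquiv.refl _).prodCongr (MulEquiv.prodMultiplicative _ _).symm).trans <|
    (MulEquiv.prodMultiplicative _ _).symm.trans <| AddEquiv.toMultiplicative <|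
      (((AddEquiv.refl A).prodCongr AddEquiv.prodComm).trans AddEquiv.prodAssoc.symm).trans
        ((LinearEquiv.finTwoArrow ℤ A).symm.toAddEquiv.prodCongr (AddEquiv.refl C))

theorem stmt_12_general (n g : ℕ)
    (σ : MulAut (Multiplicative (Fin 2 × Fin g → ℤ)))
    (hσ : ∀ v : Fin 2 × Fin g → ℤ,
      Multiplicative.toAdd (σ (Multiplicative.ofAdd v)) =
        Matrix.toLin'
          (Matrix.blockDiagonal fun _ : Fin g =>
            (!![(n : ℤ) + 2, -1; 1, 0] : Matrix (Fin 2) (Fin 2) ℤ)) v) :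
    Nonempty
      (Additive (Abelianization (Multiplicative ℤ ×
          (Multiplicative (Fin 2 × Fin g → ℤ)
            ⋊[zpowersHom (MulAut (Multiplicative (Fin 2 × Fin g → ℤ))) σ]
            Multiplicative ℤ)))
        ≃+ ((Fin 2 → ℤ) × (Fin g → ZMod n))) :=
  ⟨MulEquiv.toAdditiveLeft <| Abelianization.prodEquiv.trans <|
    (Abelianization.equivOfComm.symm.prodCongr <|
      (abelianizationSemidirectProductEquiv _).trans <|
        (quotientCoinvariantsKerEquiv hσ).prodCongr Abelianization.equivOfComm.symm).trans <|
    prodFinTwoArrowEquiv ℤ _⟩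

/-- Let `n ≥ 2`, `g ≥ 1`, let `B` be the block-diagonal
`2g × 2g` integer matrix made of `g` copies of `Aₙ = !![n+2, -1; 1, 0]`, and let
`σ_B` be the automorphism of the free abelian group `ℤ^{2g}` determined by `B`.
Then the abelianization of `ℤ × (ℤ^{2g} ⋊_{σ_B} ℤ)` is isomorphic to
`ℤ² ⊕ (ℤ/nℤ)^g`. -/
theorem stmt_12 (n g : ℕ) (hn : 2 ≤ n) (hg : 1 ≤ g)
    (σ : MulAut (Multiplicative (Fin 2 × Fin g → ℤ)))
    (hσ : ∀ v : Fin 2 × Fin g → ℤ,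
      Multiplicative.toAdd (σ (Multiplicative.ofAdd v)) =
        Matrix.toLin'
          (Matrix.blockDiagonal fun _ : Fin g =>
            (!![(n : ℤ) + 2, -1; 1, 0] : Matrix (Fin 2) (Fin 2) ℤ)) v) :
    Nonempty
      (Additive (Abelianization (Multiplicative ℤ ×
          (Multiplicative (Fin 2 × Fin g → ℤ)
            ⋊[zpowersHom (MulAut (Multiplicative (Fin 2 × Fin g → ℤ))) σ]
            Multiplicative ℤ)))
        ≃+ ((Fin 2 → ℤ) × (Fin g → ZMod n))) :=
  stmt_12_general n g σ hσ
end

section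
/- Let N be a finitely generated group, σ an automorphism of N, and G = N ⋊_σ ℤ. Let V = N^{ab} ⊗_ℤ ℚ and let T : V → V be the linear automorphism induced by σ. If 1 is not an eigenvalue of T (equivalently, T − id_V is injective), then the first rational Betti number of G equals 1; that is, (abelianization of G) ⊗_ℤ ℚ is a 1-dimensional ℚ-vector space. -/
/-!
The abelianization of `N ⋊[φ] H`, for `H` commutative, sits in a right exact sequence
`Nᵃᵇ → (N ⋊[φ] H)ᵃᵇ → H → 0` whose first map is invariant under every `φ h`, since
conjugation by `inr h` becomes trivial in the abelianization. After tensoring with `ℚ`, the first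
map kills the image of `T - id`, which is everything because `T - id` is an injective
endomorphism of a finite-dimensional space. Hence `(N ⋊ ℤ)ᵃᵇ ⊗ ℚ ≅ ℤ ⊗ ℚ = ℚ`.
-/

open TensorProduct SemidirectProduct

instance Abelianization.instGroupFG {G : Type*} [Group G] [Group.FG G] :
    Group.FG (Abelianization G) :=
  Group.fg_of_surjective (f := Abelianization.of) (QuotientGroup.mk'_surjective _)

namespace SemidirectProduct

variable {N H : Type*} [Group N] [CommGroup H] (φ : H →* MulAut N)

theorem abelianizationMap_inl_comp_map_aut (h : H) :
    (Abelianization.map (inl : N →* N ⋊[φ] H)).comp (Abelianization.map (φ h).toMonoidHom) =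
      Abelianization.map inl := by
  refine Abelianization.hom_ext _ _ (MonoidHom.ext fun n => ?_)
  simp only [MonoidHom.comp_apply, Abelianization.map_of, MulEquiv.coe_toMonoidHom]
  rw [inl_aut, map_mul, map_mul, mul_right_comm, ← map_mul, ← map_mul inr, mul_inv_cancel,
    map_one, map_one, one_mul]

theorem abelianizationLift_rightHom_comp_map_inl :
    (Abelianization.lift (rightHom : N ⋊[φ] H →* H)).comp (Abelianization.map inl) = 1 :=
  Abelianization.hom_ext _ _ (MonoidHom.ext fun n => by simp)

theorem abelianizationLift_rightHom_surjective :
    Function.Surjective (Abelianization.lift (rightHom : N ⋊[φ] H →* H)) :=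
  fun k => ⟨Abelianization.of (inr k), by simp⟩

theorem exact_abelianizationMap_inl_lift_rightHom :
    Function.Exact (MonoidHom.toAdditive (Abelianization.map (inl : N →* N ⋊[φ] H)))
      (MonoidHom.toAdditive (Abelianization.lift (rightHom : N ⋊[φ] H →* H))) := by
  refine fun a => ⟨fun ha => ?_, ?_⟩
  · obtain ⟨g, rfl⟩ : ∃ g, Additive.ofMul (Abelianization.of g) = a :=
      ⟨_, congrArg Additive.ofMul (QuotientGroup.mk_surjective a.toMul).choose_spec⟩
    have hright : g.right = 1 := by simpa using ha
    refine ⟨Additive.ofMul (Abelianization.of g.left), ?_⟩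
    rw [← inl_left_mul_inr_right g, hright]
    simp
  · rintro ⟨b, rfl⟩
    exact DFunLike.congr_fun (abelianizationLift_rightHom_comp_map_inl φ) b.toMul

end SemidirectProduct

theorem Function.Exact.injective_of_comp_eq_of_surjective_sub_id {R M P Q : Type*} [Ring R]
    [AddCommGroup M] [AddCommGroup P] [AddCommGroup Q] [Module R M] [Module R P] [Module R Q]
    {f : M →ₗ[R] P} {g : P →ₗ[R] Q} (hfg : Function.Exact f g) {T : M →ₗ[R] M}
    (hfT : f ∘ₗ T = f) (hT : Function.Surjective (T - (LinearMap.id : M →ₗ[R] M))) :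
    Function.Injective g := by
  have hf : f = 0 := LinearMap.ext fun x => by
    obtain ⟨y, rfl⟩ := hT x
    rw [LinearMap.sub_apply, map_sub, ← LinearMap.comp_apply, hfT, LinearMap.id_apply, sub_self,
      LinearMap.zero_apply]
  rw [hf] at hfg
  exact (LinearMap.exact_zero_iff_injective M g).mp hfg

/-- Let `N` be a finitely generated group, `σ ∈ Aut N`, and
`G = N ⋊_σ ℤ`.  Let `V = Nᵃᵇ ⊗_ℤ ℚ` and let `T : V → V` be the automorphism
induced by `σ`.  If `1` is not an eigenvalue of `T` (i.e. `T - id` is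
injective), then the first rational Betti number of `G` is `1`:
`(abelianization of G) ⊗_ℤ ℚ` is `1`-dimensional over `ℚ`. -/
theorem stmt_13 (N : Type*) [Group N] [Group.FG N] (σ : MulAut N)
    (h : Function.Injective
      (LinearMap.baseChange ℚ
          (MonoidHom.toAdditive (Abelianization.map σ.toMonoidHom)).toIntLinearMap -
        (LinearMap.id :
          ℚ ⊗[ℤ] Additive (Abelianization N) →ₗ[ℚ] ℚ ⊗[ℤ] Additive (Abelianization N)))) :
    Module.finrank ℚ
      (ℚ ⊗[ℤ] Additive (Abelianization
        (N ⋊[zpowersHom (MulAut N) σ] Multiplicative ℤ))) = 1 := by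
  set φ := zpowersHom (MulAut N) σ
  let J := (MonoidHom.toAdditive (Abelianization.map (inl : N →* N ⋊[φ] Multiplicative ℤ)))
    |>.toIntLinearMap
  let P := (MonoidHom.toAdditive (Abelianization.lift (rightHom : N ⋊[φ] Multiplicative ℤ →* _)))
    |>.toIntLinearMap
  have hP : Function.Surjective P := abelianizationLift_rightHom_surjective φ
  have hexact : Function.Exact (J.baseChange ℚ) (P.baseChange ℚ) := by
    rw [LinearMap.baseChange_eq_ltensor, LinearMap.baseChange_eq_ltensor]
    exact lTensor_exact ℚ (exact_abelianizationMap_inl_lift_rightHom φ) hP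
  have hJT : J.baseChange ℚ ∘ₗ
      (MonoidHom.toAdditive (Abelianization.map σ.toMonoidHom)).toIntLinearMap.baseChange ℚ =
        J.baseChange ℚ := by
    have hinv := abelianizationMap_inl_comp_map_aut φ (.ofAdd 1)
    rw [show φ (.ofAdd 1) = σ by simp [φ]] at hinv
    rw [← LinearMap.baseChange_comp]
    congr 1
    ext b
    exact congrArg Additive.ofMul (DFunLike.congr_fun hinv b.toMul)
  have hPinj := hexact.injective_of_comp_eq_of_surjective_sub_id hJT
    (LinearMap.injective_iff_surjective.mp h)
  rw [(LinearEquiv.ofBijective _ ⟨hPinj, LinearMap.lTensor_surjective ℚ hP⟩).finrank_eq,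
    Module.finrank_baseChange, (AddEquiv.additiveMultiplicative ℤ).toIntLinearEquiv.finrank_eq,
    Module.finrank_self]
end
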